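/- On the duplex repeated path network 𝒢_R on N ≥ 3 agents with all agents using Protocol AND and seed set S₀ = {j}, for all indices with 1 < j < i < N (and symmetrically 1 < i < j < N), the probability that agent i is active at steady state of the multiplex LTM is ℙ_LTM(i) = (1/4)^{|i−j|}. -/

import Mathlib

open MeasureTheory

inductive Protocol
  | OR
  | AND
deriving DecidableEq

noncomputable def ltmStep {n m : ℕ} (w : Fin m → Fin n → Fin n → ℝ)
    (u : Fin n → Protocol) (μ : Fin n → Fin m → ℝ)
    (A : Finset (Fin n)) : Finset (Fin n) :=
  A ∪ Finset.univ.filter fun i =>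
    (u i = Protocol.OR ∧ ∃ k, μ i k < ∑ j ∈ A, w k i j) ∨
    (u i = Protocol.AND ∧ ∀ k, μ i k < ∑ j ∈ A, w k i j)

noncomputable def ltmSS {n m : ℕ} (w : Fin m → Fin n → Fin n → ℝ)
    (u : Fin n → Protocol) (S₀ : Finset (Fin n))
    (μ : Fin n → Fin m → ℝ) : Finset (Fin n) :=
  (ltmStep w u μ)^[n] S₀

noncomputable def thMeasure (n m : ℕ) : Measure (Fin n → Fin m → ℝ) :=
  Measure.pi fun _ => Measure.pi fun _ => volume.restrict (Set.Icc (0:ℝ) 1)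

noncomputable def pLTM {n m : ℕ} (w : Fin m → Fin n → Fin n → ℝ)
    (u : Fin n → Protocol) (S₀ : Finset (Fin n)) (i : Fin n) : ℝ :=
  (thMeasure n m {μ | i ∈ ltmSS w u S₀ μ}).toReal

def lemStep {n m : ℕ} (S₀ : Finset (Fin n)) (u : Fin n → Protocol)
    (σ : Fin n → Fin m → Fin n) (A : Finset (Fin n)) : Finset (Fin n) :=
  S₀ ∪ A ∪ Finset.univ.filter fun i =>
    (u i = Protocol.OR ∧ ∃ k, σ i k ∈ A) ∨
    (u i = Protocol.AND ∧ ∀ k, σ i k ∈ A)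

def UReachable {n m : ℕ} (S₀ : Finset (Fin n)) (u : Fin n → Protocol)
    (σ : Fin n → Fin m → Fin n) (i : Fin n) : Prop :=
  i ∈ (lemStep S₀ u σ)^[n] S₀

instance {n m : ℕ} (S₀ : Finset (Fin n)) (u : Fin n → Protocol)
    (σ : Fin n → Fin m → Fin n) (i : Fin n) : Decidable (UReachable S₀ u σ i) := by
  unfold UReachable; infer_instance

noncomputable def rProb {n m : ℕ} (w : Fin m → Fin n → Fin n → ℝ)
    (S₀ : Finset (Fin n)) (u : Fin n → Protocol) (i : Fin n) : ℝ :=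
  ∑ σ : Fin n → Fin m → Fin n,
    if UReachable S₀ u σ i then ∏ a : Fin n, ∏ k : Fin m, w k a (σ a k) else 0

noncomputable def casCen {n m : ℕ} (w : Fin m → Fin n → Fin n → ℝ)
    (u : Fin n → Protocol) (j : Fin n) : ℝ :=
  ∑ i : Fin n, pLTM w u {j} i

noncomputable def pathW (N : ℕ) (i j : Fin N) : ℝ :=
  if j.val = i.val + 1 ∨ i.val = j.val + 1 then
    (if i.val = 0 ∨ i.val = N - 1 then 1 else 1/2)
  else 0

noncomputable def cycleW (N : ℕ) (i j : Fin N) : ℝ :=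
  if (i.val + 1) % N = j.val ∨ (j.val + 1) % N = i.val then 1/2 else 0

noncomputable def permW2 (N : ℕ) (i j : Fin N) : ℝ :=
  if ((i.val + 1) % N = j.val ∨ (j.val + 1) % N = i.val) ∧
      ¬((i.val = N - 2 ∧ j.val = N - 1) ∨ (i.val = N - 1 ∧ j.val = N - 2)) then
    (if i.val = N - 2 ∨ i.val = N - 1 then 1 else 1/2)
  else 0

/-
On the repeated path an interior agent gives weight `1/2` to each neighbour, so with one active
neighbour it activates iff both its thresholds are below `1/2`, while an endpoint only needs its
single neighbour. Hence activity spreads from the seed `j` exactly through runs of such low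
agents, and nothing crosses a blocked interior agent `m`: agents beyond `m` get no input from the
seed side, and `m` itself would need both neighbours active. So `i` is active at steady state iff
the `|i - j|` agents from `j` (excluded) to `i` (included) all have both thresholds below `1/2`,
an event of probability `(1/2)^(2|i - j|)` under independent uniform thresholds.
-/

open Finset SimpleGraph

section Dynamics

variable {n m : ℕ} {w : Fin m → Fin n → Fin n → ℝ} {u : Fin n → Protocol}
  {μ : Fin n → Fin m → ℝ}

lemma subset_ltmStep (A : Finset (Fin n)) : A ⊆ ltmStep w u μ A :=
  subset_union_left

lemma ltmStep_mono (hw : ∀ k i j, 0 ≤ w k i j) : Monotone (ltmStep w u μ) := by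
  intro A B hAB l hl
  have hsum : ∀ k, ∑ j ∈ A, w k l j ≤ ∑ j ∈ B, w k l j := fun k =>
    sum_le_sum_of_subset_of_nonneg hAB fun j _ _ => hw k l j
  simp only [ltmStep, mem_union, mem_filter, mem_univ, true_and] at hl ⊢
  rcases hl with hl | ⟨hu, k, hk⟩ | ⟨hu, hk⟩
  · exact Or.inl (hAB hl)
  · exact Or.inr (Or.inl ⟨hu, k, hk.trans_le (hsum k)⟩)
  · exact Or.inr (Or.inr ⟨hu, fun k => (hk k).trans_le (hsum k)⟩)

lemma iterate_ltmStep_subset_ltmSS {S₀ : Finset (Fin n)} {t : ℕ} (ht : t ≤ n) :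
    (ltmStep w u μ)^[t] S₀ ⊆ ltmSS w u S₀ μ :=
  Function.monotone_iterate_of_id_le subset_ltmStep ht S₀

lemma ltmSS_subset_of_ltmStep_subset (hw : ∀ k i j, 0 ≤ w k i j) {S₀ C : Finset (Fin n)}
    (h₀ : S₀ ⊆ C) (hC : ltmStep w u μ C ⊆ C) : ltmSS w u S₀ μ ⊆ C :=
  Set.MapsTo.iterate (s := {A | A ⊆ C}) (fun _ hA => (ltmStep_mono hw hA).trans hC) n h₀

lemma mem_ltmStep_of_AND {A : Finset (Fin n)} {l : Fin n} (hu : u l = Protocol.AND)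
    (hl : ∀ k, μ l k < ∑ j ∈ A, w k l j) : l ∈ ltmStep w u μ A :=
  mem_union_right _ (mem_filter.2 ⟨mem_univ l, Or.inr ⟨hu, hl⟩⟩)

lemma lt_sum_of_mem_ltmStep_AND {A : Finset (Fin n)} {l : Fin n} (hu : u l = Protocol.AND)
    (hl : l ∈ ltmStep w u μ A) (hlA : l ∉ A) (k : Fin m) : μ l k < ∑ j ∈ A, w k l j := by
  simp only [ltmStep, mem_union, hlA, mem_filter, mem_univ, true_and, hu, false_or,
    reduceCtorEq, false_and] at hl
  exact hl k

end Dynamics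

lemma Finset.exists_two_ne_zero_of_lt_sum {ι : Type*} {s : Finset ι} {f : ι → ℝ} {c : ℝ}
    (hc : 0 ≤ c) (hf : ∀ x, f x ≤ c) (h : c < ∑ x ∈ s, f x) :
    ∃ a ∈ s, ∃ b ∈ s, a ≠ b ∧ f a ≠ 0 ∧ f b ≠ 0 := by
  classical
  by_contra! hne
  have hcard : #{x ∈ s | f x ≠ 0} ≤ 1 := card_le_one.2 fun a ha b hb => by
    simp only [mem_filter] at ha hb
    by_contra hab
    exact hb.2 (hne a ha.1 b hb.1 hab ha.2)
  have hle : ∑ x ∈ s, f x ≤ c := calc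
    ∑ x ∈ s, f x = ∑ x ∈ s with f x ≠ 0, f x := (sum_filter_ne_zero s).symm
    _ ≤ #{x ∈ s | f x ≠ 0} • c := sum_le_card_nsmul _ _ _ fun x _ => hf x
    _ ≤ 1 • c := by rw [nsmul_eq_mul, nsmul_eq_mul]; gcongr
    _ = c := one_smul ℕ c
  linarith

section Path

variable {N : ℕ}

lemma pathW_nonneg (l p : Fin N) : 0 ≤ pathW N l p := by
  unfold pathW; split_ifs <;> norm_num

lemma pathW_ne_zero_iff {l p : Fin N} : pathW N l p ≠ 0 ↔ (pathGraph N).Adj l p := by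
  rw [pathGraph_adj]; unfold pathW; split_ifs <;> norm_num <;> omega

lemma half_le_pathW {l p : Fin N} (hlp : (pathGraph N).Adj l p) : 1 / 2 ≤ pathW N l p := by
  rw [pathGraph_adj] at hlp; unfold pathW; split_ifs <;> norm_num; omega

lemma pathW_le_half {l : Fin N} (hl₀ : 0 < l.val) (hl₁ : l.val < N - 1) (p : Fin N) :
    pathW N l p ≤ 1 / 2 := by
  unfold pathW; split_ifs with _ hend
  · omega
  all_goals norm_num

def pathFrom (j l : Fin N) : Finset (Fin N) := Ioc j l ∪ Ico l j

lemma mem_pathFrom {j l m : Fin N} :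
    m ∈ pathFrom j l ↔ j.val < m.val ∧ m.val ≤ l.val ∨ l.val ≤ m.val ∧ m.val < j.val := by
  simp only [pathFrom, mem_union, mem_Ioc, mem_Ico, Fin.lt_def, Fin.le_def]

lemma card_pathFrom (j l : Fin N) : #(pathFrom j l) = Nat.dist l.val j.val := by
  rw [pathFrom, card_union_of_disjoint, Fin.card_Ioc, Fin.card_Ico, Nat.dist]
  exact disjoint_left.2 fun m h₁ h₂ => by simp only [mem_Ioc, mem_Ico] at h₁ h₂; omega

lemma exists_adj_pathFrom_eq_insert {j l : Fin N} (hl : l ≠ j) :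
    ∃ p, (pathGraph N).Adj l p ∧ l ∉ pathFrom j p ∧ pathFrom j l = insert l (pathFrom j p) := by
  obtain ⟨p, hp⟩ : ∃ p : Fin N,
      l.val < j.val ∧ p.val = l.val + 1 ∨ j.val < l.val ∧ p.val + 1 = l.val := by
    rcases Nat.lt_or_gt_of_ne (Fin.val_ne_of_ne hl) with h | h
    · exact ⟨⟨l.val + 1, by omega⟩, Or.inl ⟨h, rfl⟩⟩
    · exact ⟨⟨l.val - 1, by omega⟩, Or.inr ⟨h, by simp only; omega⟩⟩
  refine ⟨p, ?_, ?_, ?_⟩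
  · rw [pathGraph_adj]; omega
  · rw [mem_pathFrom]; omega
  · ext m
    rw [mem_insert, mem_pathFrom, mem_pathFrom, Fin.ext_iff]
    omega

lemma eq_or_mem_pathFrom_of_adj {j l p m : Fin N} (hp : (pathGraph N).Adj l p)
    (hm : m ∈ pathFrom j l) : m = l ∨ m ∈ pathFrom j p := by
  rw [pathGraph_adj] at hp
  rw [mem_pathFrom] at hm ⊢
  omega

lemma mem_pathFrom_of_adj_of_adj {j l p q m : Fin N} (hp : (pathGraph N).Adj l p)
    (hq : (pathGraph N).Adj l q) (hpq : p ≠ q) (hm : m ∈ pathFrom j l) :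
    m ∈ pathFrom j p ∨ m ∈ pathFrom j q := by
  have hpq' := Fin.val_ne_of_ne hpq
  rw [pathGraph_adj] at hp hq
  simp only [mem_pathFrom] at hm ⊢
  omega

end Path

section RepeatedPath

variable {N : ℕ} {μ : Fin N → Fin 2 → ℝ} {j : Fin N}

def BelowHalf (μ : Fin N → Fin 2 → ℝ) (l : Fin N) : Prop := ∀ k, μ l k < 1 / 2

lemma mem_iterate_card_pathFrom {l : Fin N} (hlow : ∀ m ∈ pathFrom j l, BelowHalf μ m) :
    l ∈ (ltmStep (fun _ : Fin 2 => pathW N) (fun _ => Protocol.AND) μ)^[#(pathFrom j l)] {j} := by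
  induction hd : #(pathFrom j l) generalizing l with
  | zero =>
    obtain rfl : l = j := by
      by_contra hl
      obtain ⟨p, -, hlp, heq⟩ := exists_adj_pathFrom_eq_insert hl
      simp [heq] at hd
    exact mem_singleton_self l
  | succ d ih =>
    have hl : l ≠ j := by rintro rfl; simp [pathFrom] at hd
    obtain ⟨p, hadj, hlp, heq⟩ := exists_adj_pathFrom_eq_insert hl
    rw [heq, card_insert_of_notMem hlp, Nat.succ_inj] at hd
    have hp := ih (fun m hm => hlow m (heq ▸ mem_insert_of_mem hm)) hd
    rw [Function.iterate_succ_apply']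
    refine mem_ltmStep_of_AND rfl fun k => ?_
    calc μ l k < 1 / 2 := hlow l (heq ▸ mem_insert_self l _) k
      _ ≤ pathW N l p := half_le_pathW hadj
      _ ≤ _ := single_le_sum (fun q _ => pathW_nonneg l q) hp

open scoped Classical in
noncomputable def lowReach (μ : Fin N → Fin 2 → ℝ) (j : Fin N) : Finset (Fin N) :=
  {l | ∀ m ∈ pathFrom j l, 0 < m.val → m.val < N - 1 → BelowHalf μ m}

lemma mem_lowReach {l : Fin N} :
    l ∈ lowReach μ j ↔ ∀ m ∈ pathFrom j l, 0 < m.val → m.val < N - 1 → BelowHalf μ m := by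
  simp [lowReach]

lemma ltmStep_lowReach_subset (hμ : ∀ l k, 0 ≤ μ l k) :
    ltmStep (fun _ : Fin 2 => pathW N) (fun _ => Protocol.AND) μ (lowReach μ j) ⊆
      lowReach μ j := by
  intro l hl
  by_contra hlC
  have hsum := lt_sum_of_mem_ltmStep_AND rfl hl hlC
  obtain ⟨m, hm, hm₀, hm₁, hbad⟩ :
      ∃ m ∈ pathFrom j l, 0 < m.val ∧ m.val < N - 1 ∧ ¬ BelowHalf μ m := by
    simpa [mem_lowReach] using hlC
  have not_mem_pathFrom : ∀ p ∈ lowReach μ j, m ∉ pathFrom j p := fun p hp hmp =>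
    hbad (mem_lowReach.1 hp m hmp hm₀ hm₁)
  -- `l` has an active neighbour, which cannot lie beyond `l`, so the blocked agent is `l` itself
  obtain ⟨p, hpC, hp⟩ := exists_ne_zero_of_sum_ne_zero ((hμ l 0).trans_lt (hsum 0)).ne'
  obtain rfl : m = l :=
    (eq_or_mem_pathFrom_of_adj (pathW_ne_zero_iff.1 hp) hm).resolve_right (not_mem_pathFrom p hpC)
  obtain ⟨k, hk⟩ : ∃ k, 1 / 2 ≤ μ m k := by
    simp only [BelowHalf, not_forall, not_lt] at hbad
    exact hbad
  -- an interior agent needs both neighbours active to exceed a threshold `≥ 1/2`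
  obtain ⟨p, hp, q, hq, hpq, hp0, hq0⟩ :=
    exists_two_ne_zero_of_lt_sum (by norm_num) (pathW_le_half hm₀ hm₁) (hk.trans_lt (hsum k))
  rcases mem_pathFrom_of_adj_of_adj (pathW_ne_zero_iff.1 hp0) (pathW_ne_zero_iff.1 hq0) hpq hm
    with h | h
  · exact not_mem_pathFrom p hp h
  · exact not_mem_pathFrom q hq h

lemma mem_ltmSS_pathW_AND_iff (hμ : ∀ l k, 0 ≤ μ l k) {i : Fin N} (hi₀ : 1 ≤ i.val)
    (hi₁ : i.val < N - 1) :
    i ∈ ltmSS (fun _ : Fin 2 => pathW N) (fun _ => Protocol.AND) {j} μ ↔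
      ∀ m ∈ pathFrom j i, BelowHalf μ m := by
  constructor
  · intro hi m hm
    have hseed : {j} ⊆ lowReach μ j := by simp [mem_lowReach, pathFrom]
    have hiC := ltmSS_subset_of_ltmStep_subset (fun _ l p => pathW_nonneg l p) hseed
      (ltmStep_lowReach_subset hμ) hi
    have hm' := mem_pathFrom.1 hm
    exact mem_lowReach.1 hiC m hm (by omega) (by omega)
  · intro hlow
    have hcard : #(pathFrom j i) ≤ N := (card_le_univ _).trans_eq (Fintype.card_fin N)
    exact iterate_ltmStep_subset_ltmSS hcard (mem_iterate_card_pathFrom hlow)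

end RepeatedPath

lemma ae_nonneg_thMeasure (n m : ℕ) : ∀ᵐ μ ∂thMeasure n m, ∀ l k, 0 ≤ μ l k := by
  have hunit : ∀ᵐ x ∂volume.restrict (Set.Icc (0 : ℝ) 1), 0 ≤ x :=
    (ae_restrict_mem measurableSet_Icc).mono fun _ hx => hx.1
  unfold thMeasure
  refine ae_all_iff.2 fun l =>
    Measure.tendsto_eval_ae_ae.eventually (p := fun x : Fin m → ℝ => ∀ k, 0 ≤ x k) ?_
  exact ae_all_iff.2 fun k => Measure.tendsto_eval_ae_ae.eventually hunit

lemma volume_restrict_unitInterval_Iio {c : ℝ} (hc : c ≤ 1) :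
    volume.restrict (Set.Icc (0 : ℝ) 1) (Set.Iio c) = ENNReal.ofReal c := by
  have hinter : Set.Iio c ∩ Set.Icc 0 1 = Set.Ico 0 c := by
    ext x
    simp only [Set.mem_inter_iff, Set.mem_Iio, Set.mem_Icc, Set.mem_Ico]
    exact ⟨fun h => ⟨h.2.1, h.1⟩, fun h => ⟨h.2, h.1, h.2.le.trans hc⟩⟩
  rw [Measure.restrict_apply measurableSet_Iio, hinter, Real.volume_Ico, sub_zero]

lemma thMeasure_forall_lt (n m : ℕ) (s : Finset (Fin n)) {c : ℝ} (hc : c ≤ 1) :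
    thMeasure n m {μ | ∀ l ∈ s, ∀ k, μ l k < c} = ENNReal.ofReal c ^ (m * #s) := by
  classical
  have hbox : {μ : Fin n → Fin m → ℝ | ∀ l ∈ s, ∀ k, μ l k < c} =
      Set.univ.pi fun l => if l ∈ s then Set.univ.pi fun _ => Set.Iio c else Set.univ := by
    ext μ
    simp
  have hunit : volume.restrict (Set.Icc (0 : ℝ) 1) Set.univ = 1 := by
    rw [Measure.restrict_apply_univ, Real.volume_Icc, sub_zero, ENNReal.ofReal_one]
  rw [thMeasure, hbox, Measure.pi_pi]
  simp only [apply_ite, Measure.pi_pi, Measure.pi_univ, volume_restrict_unitInterval_Iio hc,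
    hunit, prod_const, card_univ, Fintype.card_fin, one_pow]
  rw [prod_ite_mem, univ_inter, prod_const, pow_mul]

theorem repeated_path_AND_prob_general (N : ℕ) (i j : Fin N)
    (hi1 : 1 ≤ i.val) (hi2 : i.val < N - 1) :
    pLTM (fun _ : Fin 2 => pathW N) (fun _ => Protocol.AND) {j} i =
      (1/4 : ℝ) ^ (Nat.dist i.val j.val) := by
  have hevent : {μ | i ∈ ltmSS (fun _ : Fin 2 => pathW N) (fun _ => Protocol.AND) {j} μ}
      =ᵐ[thMeasure N 2] {μ | ∀ l ∈ pathFrom j i, ∀ k, μ l k < 1 / 2} := by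
    filter_upwards [ae_nonneg_thMeasure N 2] with μ hμ
    exact propext (mem_ltmSS_pathW_AND_iff hμ hi1 hi2)
  rw [pLTM, measure_congr hevent, thMeasure_forall_lt N 2 _ (by norm_num),
    card_pathFrom, pow_mul, ENNReal.toReal_pow, ← ENNReal.ofReal_pow (by norm_num),
    ENNReal.toReal_ofReal (by norm_num)]
  norm_num

/-- on the duplex repeated path network on `N ≥ 3` agents with all
agents using Protocol AND and seed `{j}`, for interior agents `i ≠ j`,
ℙ_LTM(i) = (1/4)^{|i−j|}. (0-indexed agents.) -/
theorem repeated_path_AND_prob (N : ℕ) (hN : 3 ≤ N) (i j : Fin N)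
    (hi1 : 1 ≤ i.val) (hi2 : i.val < N - 1)
    (hj1 : 1 ≤ j.val) (hj2 : j.val < N - 1) (hij : i ≠ j) :
    pLTM (fun _ : Fin 2 => pathW N) (fun _ => Protocol.AND) {j} i =
      (1/4 : ℝ) ^ (Nat.dist i.val j.val) :=
  repeated_path_AND_prob_general N i j hi1 hi2
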